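/- Let Z be an s×q random matrix with i.i.d. standard normal entries, V a q×q symmetric matrix, and x ∈ ℝ^s a unit vector. Then E[(xᵀ Z V Zᵀ x)²] ≤ tr(V)² + 2‖V‖_F² + 3 Σ_j V_{jj}² · Σ_i x_i⁴ ≤ tr(V)² + 2‖V‖_F² + 3‖V‖_F², and in particular E[(xᵀ Z V Zᵀ x)²] ≤ tr(V)² + 5‖V‖_F². -/

import Mathlib

/-!
Stack the entries of `Z` into one Gaussian vector indexed by `Fin s × Fin q`. Then
`xᵀ Z V Zᵀ x = vec(Z)ᵀ (x xᵀ ⊗ V) vec(Z)`, and Isserlis' formula for the fourth moments of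
independent centred Gaussians gives `E[(vec(Z)ᵀ A vec(Z))²] = tr(A)² + 2 ‖A‖_F²` for every
symmetric `A`. For `A = x xᵀ ⊗ V` with `‖x‖ = 1` this is exactly `tr(V)² + 2 ‖V‖_F²`; the
remaining inequalities follow from `Σ x_i⁴ ≤ (Σ x_i²)² = 1` and `Σ_j V_jj² ≤ ‖V‖_F²`.
-/

open MeasureTheory Finset Real
open scoped NNReal Kronecker

namespace ProbabilityTheory

section GaussianMoments

open Polynomial

noncomputable def gaussianDerivStep (v : ℝ) (P : ℝ[X]) : ℝ[X] :=
  derivative P + Polynomial.C v * X * P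

lemma deriv_eval_mul_exp (v : ℝ) (P : ℝ[X]) :
    deriv (fun t ↦ P.eval t * exp (v * t ^ 2 / 2))
      = fun t ↦ (gaussianDerivStep v P).eval t * exp (v * t ^ 2 / 2) := by
  funext t
  have h : HasDerivAt (fun t ↦ v * t ^ 2 / 2) (v * t) t :=
    (((hasDerivAt_pow 2 t).const_mul v).div_const 2).congr_deriv (by push_cast; ring)
  rw [((P.hasDerivAt t).fun_mul h.exp).deriv, gaussianDerivStep]
  simp only [eval_add, eval_mul, eval_C, eval_X]
  ring

lemma iteratedDeriv_eval_mul_exp (v : ℝ) (n : ℕ) (P : ℝ[X]) :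
    iteratedDeriv n (fun t ↦ P.eval t * exp (v * t ^ 2 / 2))
      = fun t ↦ ((gaussianDerivStep v)^[n] P).eval t * exp (v * t ^ 2 / 2) := by
  induction n generalizing P with
  | zero => rfl
  | succ n ih =>
    rw [iteratedDeriv_succ', deriv_eval_mul_exp, ih, Function.iterate_succ_apply]

/-- The moments are the derivatives at `0` of the moment generating function `exp (v t² / 2)`. -/
lemma integral_pow_gaussianReal (v : ℝ≥0) (n : ℕ) :
    ∫ x, x ^ n ∂gaussianReal 0 v = ((gaussianDerivStep v)^[n] 1).eval 0 := by
  have h0 : (0 : ℝ) ∈ interior (integrableExpSet id (gaussianReal 0 v)) := by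
    simp [integrableExpSet_id_gaussianReal]
  have hmgf : mgf id (gaussianReal 0 v) = fun t ↦ (1 : ℝ[X]).eval t * exp (v * t ^ 2 / 2) := by
    simp [mgf_id_gaussianReal]
  have h := iteratedDeriv_mgf_zero h0 n
  rw [hmgf, iteratedDeriv_eval_mul_exp] at h
  simpa using h.symm

lemma integral_sq_gaussianReal (v : ℝ≥0) : ∫ x, x ^ 2 ∂gaussianReal 0 v = v := by
  simp only [integral_pow_gaussianReal, Function.iterate_succ_apply',
    Function.iterate_zero_apply, gaussianDerivStep, derivative_add, derivative_mul,
    derivative_C, derivative_X, derivative_one, eval_add, eval_mul, eval_C, eval_X, eval_one,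
    eval_zero, map_zero]
  ring

lemma integral_pow_four_gaussianReal (v : ℝ≥0) :
    ∫ x, x ^ 4 ∂gaussianReal 0 v = 3 * (v : ℝ) ^ 2 := by
  simp only [integral_pow_gaussianReal, Function.iterate_succ_apply',
    Function.iterate_zero_apply, gaussianDerivStep, derivative_add, derivative_mul,
    derivative_C, derivative_X, derivative_one, eval_add, eval_mul, eval_C, eval_X, eval_one,
    eval_zero, map_zero]
  ring

end GaussianMoments

variable {Ω ι : Type*} {m : MeasurableSpace Ω} {μ : Measure Ω}

/-- The number of ways to split four positions carrying the indices `a b c d` into two pairs of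
equal indices. -/
def wickPairings [DecidableEq ι] (a b c d : ι) : ℝ :=
  (if a = b then 1 else 0) * (if c = d then 1 else 0)
    + (if a = c then 1 else 0) * (if b = d then 1 else 0)
    + (if a = d then 1 else 0) * (if b = c then 1 else 0)

lemma _root_.Matrix.IsSymm.sum_mul_mul_wickPairings [Fintype ι] [DecidableEq ι]
    {A : Matrix ι ι ℝ} (hA : A.IsSymm) :
    ∑ a, ∑ b, ∑ c, ∑ d, A a b * A c d * wickPairings a b c d
      = A.trace ^ 2 + 2 * ∑ a, ∑ b, A a b ^ 2 := by
  have hsymm (a b : ι) : A b a = A a b := by simpa using congrFun (congrFun hA a) b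
  have h₁ : ∑ a, ∑ b, ∑ c, ∑ d,
      A a b * A c d * ((if a = b then 1 else 0) * (if c = d then 1 else 0)) = A.trace ^ 2 := by
    simp [Matrix.trace, sq, sum_mul_sum, mul_ite]
  have h₂ : ∑ a, ∑ b, ∑ c, ∑ d,
      A a b * A c d * ((if a = c then 1 else 0) * (if b = d then 1 else 0))
        = ∑ a, ∑ b, A a b ^ 2 := by
    simp [mul_ite, sq]
  have h₃ : ∑ a, ∑ b, ∑ c, ∑ d,
      A a b * A c d * ((if a = d then 1 else 0) * (if b = c then 1 else 0))
        = ∑ a, ∑ b, A a b ^ 2 := by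
    simp [mul_ite, sq, hsymm]
  simp only [wickPairings, mul_add, sum_add_distrib]
  rw [h₁, h₂, h₃]
  ring

lemma memLp_of_map_eq_gaussianReal {X : Ω → ℝ} (hX : Measurable X) {c : ℝ} {v : ℝ≥0}
    (hmap : μ.map X = gaussianReal c v) (p : ℝ≥0) : MemLp X p μ := by
  have h := memLp_id_gaussianReal (μ := c) (v := v) p
  rwa [← hmap, memLp_map_measure_iff (by fun_prop) hX.aemeasurable] at h

lemma integrable_mul_mul_mul_of_memLp {𝕜 : Type*} [NormedCommRing 𝕜] {X₁ X₂ X₃ X₄ : Ω → 𝕜}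
    (h₁ : MemLp X₁ 4 μ) (h₂ : MemLp X₂ 4 μ) (h₃ : MemLp X₃ 4 μ) (h₄ : MemLp X₄ 4 μ) :
    Integrable (fun ω ↦ X₁ ω * X₂ ω * X₃ ω * X₄ ω) μ := by
  have h := MemLp.prod' (s := univ) (f := ![X₁, X₂, X₃, X₄]) (p := fun _ ↦ 4) (μ := μ)
    (by intro i _; fin_cases i <;> assumption)
  rw [← memLp_one_iff_integrable]
  convert h using 1
  · funext ω
    simp [Fin.prod_univ_four]
  · simp [ENNReal.mul_inv_cancel]

section Isserlis

variable {Z : ι → Ω → ℝ} (hmeas : ∀ i, Measurable (Z i))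
include hmeas

lemma iIndepFun.integral_mul_mul_mul_eq_zero (hindep : iIndepFun Z μ) {a b c d : ι}
    (hab : a ≠ b) (hac : a ≠ c) (had : a ≠ d) (h₀ : ∫ ω, Z a ω ∂μ = 0) :
    ∫ ω, Z a ω * Z b ω * Z c ω * Z d ω ∂μ = 0 := by
  classical
  have hdisj : Disjoint ({a} : Finset ι) {b, c, d} := by simp [hab, hac, had]
  have h := (hindep.indepFun_finset _ _ hdisj hmeas).integral_fun_comp_mul_comp
    (f := fun z : ({a} : Finset ι) → ℝ ↦ z ⟨a, by simp⟩)
    (g := fun z : ({b, c, d} : Finset ι) → ℝ ↦ z ⟨b, by simp⟩ * z ⟨c, by simp⟩ * z ⟨d, by simp⟩)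
    (by fun_prop) (by fun_prop) (Measurable.aestronglyMeasurable (by fun_prop))
    (Measurable.aestronglyMeasurable (by fun_prop))
  rw [h₀, zero_mul] at h
  rw [← h]
  congr 1; funext ω; ring

lemma iIndepFun.integral_mul_mul_mul_eq_zero_of_lonely (hindep : iIndepFun Z μ)
    (h₀ : ∀ i, ∫ ω, Z i ω ∂μ = 0) {a b c d : ι}
    (h : (a ≠ b ∧ a ≠ c ∧ a ≠ d) ∨ (b ≠ a ∧ b ≠ c ∧ b ≠ d) ∨
      (c ≠ a ∧ c ≠ b ∧ c ≠ d) ∨ (d ≠ a ∧ d ≠ b ∧ d ≠ c)) :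
    ∫ ω, Z a ω * Z b ω * Z c ω * Z d ω ∂μ = 0 := by
  rcases h with ⟨h₁, h₂, h₃⟩ | ⟨h₁, h₂, h₃⟩ | ⟨h₁, h₂, h₃⟩ | ⟨h₁, h₂, h₃⟩
  · exact hindep.integral_mul_mul_mul_eq_zero hmeas h₁ h₂ h₃ (h₀ a)
  · rw [← hindep.integral_mul_mul_mul_eq_zero hmeas h₁ h₂ h₃ (h₀ b)]
    congr 1; funext ω; ring
  · rw [← hindep.integral_mul_mul_mul_eq_zero hmeas h₁ h₂ h₃ (h₀ c)]
    congr 1; funext ω; ring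
  · rw [← hindep.integral_mul_mul_mul_eq_zero hmeas h₁ h₂ h₃ (h₀ d)]
    congr 1; funext ω; ring

variable {v : ℝ≥0} (hdist : ∀ i, μ.map (Z i) = gaussianReal 0 v)
include hdist

lemma integral_pow_of_map_eq_gaussianReal (i : ι) (n : ℕ) :
    ∫ ω, Z i ω ^ n ∂μ = ∫ x, x ^ n ∂gaussianReal 0 v := by
  rw [← hdist i, integral_map (hmeas i).aemeasurable (by fun_prop)]

lemma integrable_mul_mul_mul_of_map_eq_gaussianReal (a b c d : ι) :
    Integrable (fun ω ↦ Z a ω * Z b ω * Z c ω * Z d ω) μ :=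
  integrable_mul_mul_mul_of_memLp (memLp_of_map_eq_gaussianReal (hmeas a) (hdist a) 4)
    (memLp_of_map_eq_gaussianReal (hmeas b) (hdist b) 4)
    (memLp_of_map_eq_gaussianReal (hmeas c) (hdist c) 4)
    (memLp_of_map_eq_gaussianReal (hmeas d) (hdist d) 4)

variable (hindep : iIndepFun Z μ)
include hindep

lemma iIndepFun.integral_mul_self_mul_mul_self [DecidableEq ι] (a c : ι) :
    ∫ ω, Z a ω * Z a ω * Z c ω * Z c ω ∂μ = if a = c then 3 * (v : ℝ) ^ 2 else (v : ℝ) ^ 2 := by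
  split_ifs with hac
  · subst hac
    rw [← integral_pow_four_gaussianReal, ← integral_pow_of_map_eq_gaussianReal hmeas hdist a]
    congr 1; funext ω; ring
  · have h := (hindep.indepFun hac).integral_fun_comp_mul_comp (f := fun x ↦ x ^ 2)
      (g := fun x ↦ x ^ 2) (hmeas a).aemeasurable (hmeas c).aemeasurable (by fun_prop) (by fun_prop)
    simp only [integral_pow_of_map_eq_gaussianReal hmeas hdist, integral_sq_gaussianReal] at h
    rw [sq, ← h]
    congr 1; funext ω; ring

lemma iIndepFun.integral_mul_mul_mul_eq_wickPairings [DecidableEq ι] (a b c d : ι) :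
    ∫ ω, Z a ω * Z b ω * Z c ω * Z d ω ∂μ = (v : ℝ) ^ 2 * wickPairings a b c d := by
  have h₀ (i : ι) : ∫ ω, Z i ω ∂μ = 0 := by
    simpa [integral_id_gaussianReal] using integral_pow_of_map_eq_gaussianReal hmeas hdist i 1
  by_cases hlonely : (a ≠ b ∧ a ≠ c ∧ a ≠ d) ∨ (b ≠ a ∧ b ≠ c ∧ b ≠ d) ∨
      (c ≠ a ∧ c ≠ b ∧ c ≠ d) ∨ (d ≠ a ∧ d ≠ b ∧ d ≠ c)
  · rw [hindep.integral_mul_mul_mul_eq_zero_of_lonely hmeas h₀ hlonely]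
    rcases hlonely with ⟨h₁, h₂, h₃⟩ | ⟨h₁, h₂, h₃⟩ | ⟨h₁, h₂, h₃⟩ | ⟨h₁, h₂, h₃⟩ <;>
      simp [wickPairings, h₁, h₂, h₃, Ne.symm h₁, Ne.symm h₂, Ne.symm h₃]
  have hpair (a c : ι) :
      ∫ ω, Z a ω * Z a ω * Z c ω * Z c ω ∂μ = (v : ℝ) ^ 2 * wickPairings a a c c := by
    rw [hindep.integral_mul_self_mul_mul_self hmeas hdist]
    by_cases hac : a = c
    · simp [wickPairings, hac]; ring
    · simp [wickPairings, hac]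
  obtain ⟨rfl, rfl⟩ | ⟨rfl, rfl⟩ | ⟨rfl, rfl⟩ :
      (a = b ∧ c = d) ∨ (a = c ∧ b = d) ∨ (a = d ∧ b = c) := by grind
  · exact hpair a c
  · rw [show ∫ ω, Z a ω * Z b ω * Z a ω * Z b ω ∂μ = ∫ ω, Z a ω * Z a ω * Z b ω * Z b ω ∂μ by
      congr 1; funext ω; ring, hpair]
    simp only [wickPairings, @eq_comm _ b a]
    ring
  · rw [show ∫ ω, Z a ω * Z b ω * Z b ω * Z a ω ∂μ = ∫ ω, Z a ω * Z a ω * Z b ω * Z b ω ∂μ by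
      congr 1; funext ω; ring, hpair]
    simp only [wickPairings, @eq_comm _ b a]
    ring

theorem iIndepFun.integral_sum_sum_mul_mul_sq [Fintype ι] {A : Matrix ι ι ℝ} (hA : A.IsSymm) :
    ∫ ω, (∑ a, ∑ b, A a b * Z a ω * Z b ω) ^ 2 ∂μ
      = (v : ℝ) ^ 2 * (A.trace ^ 2 + 2 * ∑ a, ∑ b, A a b ^ 2) := by
  classical
  have hexpand (ω : Ω) : (∑ a, ∑ b, A a b * Z a ω * Z b ω) ^ 2
      = ∑ a, ∑ b, ∑ c, ∑ d, A a b * A c d * (Z a ω * Z b ω * Z c ω * Z d ω) := by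
    simp only [sq, sum_mul, mul_sum]
    refine sum_congr rfl fun a _ ↦ sum_congr rfl fun b _ ↦ sum_congr rfl fun c _ ↦
      sum_congr rfl fun d _ ↦ ?_
    ring
  have hint (a b c d : ι) : Integrable (fun ω ↦ Z a ω * Z b ω * Z c ω * Z d ω) μ :=
    integrable_mul_mul_mul_of_map_eq_gaussianReal hmeas hdist a b c d
  calc ∫ ω, (∑ a, ∑ b, A a b * Z a ω * Z b ω) ^ 2 ∂μ
      = ∑ a, ∑ b, ∑ c, ∑ d, A a b * A c d * ∫ ω, Z a ω * Z b ω * Z c ω * Z d ω ∂μ := by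
        simp_rw [hexpand]
        simp (disch := intros; fun_prop) only [integral_finsetSum, integral_const_mul]
    _ = (v : ℝ) ^ 2 * ∑ a, ∑ b, ∑ c, ∑ d, A a b * A c d * wickPairings a b c d := by
        simp only [hindep.integral_mul_mul_mul_eq_wickPairings hmeas hdist, mul_sum]
        refine sum_congr rfl fun a _ ↦ sum_congr rfl fun b _ ↦ sum_congr rfl fun c _ ↦
          sum_congr rfl fun d _ ↦ ?_
        ring
    _ = _ := by rw [hA.sum_mul_mul_wickPairings]

end Isserlis

end ProbabilityTheory

namespace Matrix

variable {l n R : Type*}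

lemma IsSymm.kronecker [Mul R] {A : Matrix l l R} {B : Matrix n n R} (hA : A.IsSymm)
    (hB : B.IsSymm) : (A ⊗ₖ B).IsSymm := by
  change (kroneckerMap (· * ·) A B)ᵀ = kroneckerMap (· * ·) A B
  rw [← kroneckerMap_transpose, hA.eq, hB.eq]

section CommSemiring

variable [CommSemiring R]

lemma sum_sum_kronecker_sq [Fintype l] [Fintype n] (A : Matrix l l R) (B : Matrix n n R) :
    ∑ a, ∑ b, (A ⊗ₖ B) a b ^ 2 = (∑ i, ∑ j, A i j ^ 2) * ∑ i, ∑ j, B i j ^ 2 := by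
  simp only [Fintype.sum_prod_type, kronecker_apply, mul_pow, sum_mul_sum]

lemma sum_sum_vecMulVec_sq [Fintype n] (x y : n → R) :
    ∑ i, ∑ j, vecMulVec x y i j ^ 2 = (∑ i, x i ^ 2) * ∑ j, y j ^ 2 := by
  simp only [vecMulVec_apply, mul_pow, sum_mul_sum]

lemma sum_sum_vecMulVec_kronecker_mul_mul [Fintype l] [Fintype n] (x : l → R)
    (V : Matrix n n R) (z : l × n → R) :
    ∑ a, ∑ b, (vecMulVec x x ⊗ₖ V) a b * z a * z b
      = ∑ i₁, ∑ i₂, ∑ j₁, ∑ j₂, x i₁ * z (i₁, j₁) * V j₁ j₂ * z (i₂, j₂) * x i₂ := by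
  simp only [Fintype.sum_prod_type, kronecker_apply, vecMulVec_apply]
  refine sum_congr rfl fun i₁ _ ↦ ?_
  rw [sum_comm]
  refine sum_congr rfl fun i₂ _ ↦ sum_congr rfl fun j₁ _ ↦ sum_congr rfl fun j₂ _ ↦ ?_
  ring

end CommSemiring

lemma sum_diag_sq_le_sum_sum_sq [CommRing R] [LinearOrder R] [IsStrictOrderedRing R] [Fintype n]
    (A : Matrix n n R) : ∑ i, A i i ^ 2 ≤ ∑ i, ∑ j, A i j ^ 2 :=
  sum_le_sum fun i _ ↦ single_le_sum (f := fun j ↦ A i j ^ 2) (fun _ _ ↦ sq_nonneg _) (mem_univ i)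

end Matrix

lemma Finset.sum_pow_four_le_sq_sum_sq {ι R : Type*} [CommRing R] [LinearOrder R]
    [IsStrictOrderedRing R] (s : Finset ι) (f : ι → R) :
    ∑ i ∈ s, f i ^ 4 ≤ (∑ i ∈ s, f i ^ 2) ^ 2 := by
  simpa [← pow_mul] using sum_sq_le_sq_sum_of_nonneg (s := s) fun i _ ↦ sq_nonneg (f i)

open Matrix MeasureTheory ProbabilityTheory

theorem gaussian_quadform_unitvec_second_moment_general
    {Ω : Type*} [MeasureSpace Ω]
    {s q : ℕ} (Z : Fin s × Fin q → Ω → ℝ)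
    (hmeas : ∀ i, Measurable (Z i))
    (hindep : iIndepFun Z (ℙ : Measure Ω))
    (hdist : ∀ i, Measure.map (Z i) (ℙ : Measure Ω) = gaussianReal 0 1)
    (V : Matrix (Fin q) (Fin q) ℝ) (hV : V.IsSymm)
    (x : Fin s → ℝ) (hx : ∑ i, (x i) ^ 2 = 1) :
    (∫ ω, (∑ i₁, ∑ i₂, ∑ j₁, ∑ j₂,
        x i₁ * Z (i₁, j₁) ω * V j₁ j₂ * Z (i₂, j₂) ω * x i₂) ^ 2 ∂(ℙ : Measure Ω))
      ≤ V.trace ^ 2 + 2 * (∑ j₁, ∑ j₂, (V j₁ j₂) ^ 2)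
          + 3 * (∑ j, (V j j) ^ 2) * (∑ i, (x i) ^ 4)
    ∧ V.trace ^ 2 + 2 * (∑ j₁, ∑ j₂, (V j₁ j₂) ^ 2)
          + 3 * (∑ j, (V j j) ^ 2) * (∑ i, (x i) ^ 4)
        ≤ V.trace ^ 2 + 2 * (∑ j₁, ∑ j₂, (V j₁ j₂) ^ 2) + 3 * (∑ j₁, ∑ j₂, (V j₁ j₂) ^ 2)
    ∧ (∫ ω, (∑ i₁, ∑ i₂, ∑ j₁, ∑ j₂,
        x i₁ * Z (i₁, j₁) ω * V j₁ j₂ * Z (i₂, j₂) ω * x i₂) ^ 2 ∂(ℙ : Measure Ω))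
      ≤ V.trace ^ 2 + 5 * (∑ j₁, ∑ j₂, (V j₁ j₂) ^ 2) := by
  have hexact : ∫ ω, (∑ i₁, ∑ i₂, ∑ j₁, ∑ j₂,
        x i₁ * Z (i₁, j₁) ω * V j₁ j₂ * Z (i₂, j₂) ω * x i₂) ^ 2 ∂(ℙ : Measure Ω)
      = V.trace ^ 2 + 2 * ∑ j₁, ∑ j₂, V j₁ j₂ ^ 2 := by
    have hvec (ω : Ω) := sum_sum_vecMulVec_kronecker_mul_mul x V fun a ↦ Z a ω
    simp_rw [← hvec]
    rw [hindep.integral_sum_sum_mul_mul_sq hmeas hdist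
      (IsSymm.kronecker (transpose_vecMulVec x x) hV), trace_kronecker, trace_vecMulVec,
      sum_sum_kronecker_sq, sum_sum_vecMulVec_sq, hx]
    simp [dotProduct, ← sq, hx]
  have hx4 : ∑ i, x i ^ 4 ≤ 1 := by simpa [hx] using sum_pow_four_le_sq_sum_sq univ x
  have hdiag := V.sum_diag_sq_le_sum_sum_sq
  have hdiag₀ : 0 ≤ ∑ j, V j j ^ 2 := sum_nonneg fun _ _ ↦ sq_nonneg _
  have hx4₀ : 0 ≤ ∑ i, x i ^ 4 := sum_nonneg fun _ _ ↦ by positivity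
  refine ⟨?_, ?_, ?_⟩
  · rw [hexact]
    nlinarith [mul_nonneg hdiag₀ hx4₀]
  · nlinarith [mul_le_mul hdiag hx4 hx4₀ (hdiag₀.trans hdiag)]
  · rw [hexact]
    nlinarith [hdiag₀.trans hdiag]

/-- For `Z` an `s × q` matrix with i.i.d. standard normal entries, `V` symmetric, and a unit
vector `x`: `E[(xᵀ Z V Zᵀ x)²] ≤ tr(V)² + 2‖V‖_F² + 3 Σ_j V_{jj}² · Σ_i x_i⁴`, which is at
most `tr(V)² + 2‖V‖_F² + 3‖V‖_F²`; in particular `E[(xᵀ Z V Zᵀ x)²] ≤ tr(V)² + 5‖V‖_F²`. -/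
theorem gaussian_quadform_unitvec_second_moment
    {Ω : Type*} [MeasureSpace Ω] [IsProbabilityMeasure (ℙ : Measure Ω)]
    {s q : ℕ} (Z : Fin s × Fin q → Ω → ℝ)
    (hmeas : ∀ i, Measurable (Z i))
    (hindep : iIndepFun Z (ℙ : Measure Ω))
    (hdist : ∀ i, Measure.map (Z i) (ℙ : Measure Ω) = gaussianReal 0 1)
    (V : Matrix (Fin q) (Fin q) ℝ) (hV : V.IsSymm)
    (x : Fin s → ℝ) (hx : ∑ i, (x i) ^ 2 = 1) :
    (∫ ω, (∑ i₁, ∑ i₂, ∑ j₁, ∑ j₂,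
        x i₁ * Z (i₁, j₁) ω * V j₁ j₂ * Z (i₂, j₂) ω * x i₂) ^ 2 ∂(ℙ : Measure Ω))
      ≤ V.trace ^ 2 + 2 * (∑ j₁, ∑ j₂, (V j₁ j₂) ^ 2)
          + 3 * (∑ j, (V j j) ^ 2) * (∑ i, (x i) ^ 4)
    ∧ V.trace ^ 2 + 2 * (∑ j₁, ∑ j₂, (V j₁ j₂) ^ 2)
          + 3 * (∑ j, (V j j) ^ 2) * (∑ i, (x i) ^ 4)
        ≤ V.trace ^ 2 + 2 * (∑ j₁, ∑ j₂, (V j₁ j₂) ^ 2) + 3 * (∑ j₁, ∑ j₂, (V j₁ j₂) ^ 2)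
    ∧ (∫ ω, (∑ i₁, ∑ i₂, ∑ j₁, ∑ j₂,
        x i₁ * Z (i₁, j₁) ω * V j₁ j₂ * Z (i₂, j₂) ω * x i₂) ^ 2 ∂(ℙ : Measure Ω))
      ≤ V.trace ^ 2 + 5 * (∑ j₁, ∑ j₂, (V j₁ j₂) ^ 2) :=
  gaussian_quadform_unitvec_second_moment_general Z hmeas hindep hdist V hV x hx
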